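/- arXiv:2006.11500 — 2 statements merged into one kernel-verified Lean document; each statement's English description precedes it below -/
import Mathlib

section
/- Let (X, ‖·‖) be a real Banach space and let T : X → X be an enriched 𝒜-contraction. Then the fixed point problem for T has the limit shadowing property: for every sequence (u_n) in X with ‖u_n − T u_n‖ → 0 as n → ∞, there exists p ∈ X such that ‖Tⁿp − u_n‖ → 0 as n → ∞. -/
/-- Membership in the class `𝒜` of Akram-type comparison functions. -/
def MemA (f : ℝ × ℝ × ℝ → ℝ) : Prop :=
  ContinuousOn f {p : ℝ × ℝ × ℝ | 0 ≤ p.1 ∧ 0 ≤ p.2.1 ∧ 0 ≤ p.2.2} ∧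
  (∃ k : ℝ, 0 ≤ k ∧ k < 1 ∧ ∀ r s : ℝ, 0 ≤ r → 0 ≤ s →
    (r ≤ f (s, r, s) ∨ r ≤ f (r, s, s)) → r ≤ k * s) ∧
  (∀ lam : ℝ, 0 < lam → ∀ r s t : ℝ, 0 ≤ r → 0 ≤ s → 0 ≤ t →
    lam * f (r, s, t) ≤ f (lam * r, lam * s, lam * t))

/-!
Averaging `T` with the identity, `S = (1 - λ) I + λ T` with `λ = 1 / (b + 1)`, turns the
enriched condition into Akram's condition `d(Sx, Sy) ≤ f(d(x, y), d(x, Sx), d(y, Sy))`, and `S`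
has the same fixed points as `T`. Picard iteration of `S` converges geometrically to a fixed
point `p`. Homogeneity of `f`, together with `f(1, 0, 0) < 1` and continuity at `(1, 0, 0)`,
gives a linear error bound `d(x, p) ≤ C · d(x, Sx)`; since `d(x, Sx)` is a fixed multiple of
`‖x - Tx‖`, every sequence of approximate fixed points of `T` converges to `p = Tⁿ p`.
-/

open Filter Function Topology

def IsAContraction {M : Type*} [MetricSpace M] (f : ℝ × ℝ × ℝ → ℝ) (S : M → M) : Prop :=
  ∀ x y, x ≠ y → dist (S x) (S y) ≤ f (dist x y, dist x (S x), dist y (S y))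

def IsEnrichedAContraction {X : Type*} [NormedAddCommGroup X] [NormedSpace ℝ X]
    (f : ℝ × ℝ × ℝ → ℝ) (b : ℝ) (T : X → X) : Prop :=
  ∀ u v, u ≠ v → ‖b • (u - v) + T u - T v‖ ≤ f ((b + 1) * ‖u - v‖, ‖u - T u‖, ‖v - T v‖)

def krasnoselskijMap {X : Type*} [AddCommGroup X] [Module ℝ X] (lam : ℝ) (T : X → X) (x : X) :
    X :=
  (1 - lam) • x + lam • T x

namespace MemA

variable {f : ℝ × ℝ × ℝ → ℝ}

theorem tendsto_comp {α : Type*} (hf : MemA f) {l : Filter α} {g : α → ℝ × ℝ × ℝ}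
    {q : ℝ × ℝ × ℝ} (hg : Tendsto g l (𝓝 q)) (hq : 0 ≤ q.1 ∧ 0 ≤ q.2.1 ∧ 0 ≤ q.2.2)
    (hpos : ∀ᶠ a in l, 0 ≤ (g a).1 ∧ 0 ≤ (g a).2.1 ∧ 0 ≤ (g a).2.2) :
    Tendsto (f ∘ g) l (𝓝 (f q)) :=
  (hf.1 q hq).tendsto.comp (tendsto_nhdsWithin_iff.2 ⟨hg, hpos⟩)

theorem eq_zero_of_le_apply_zero (hf : MemA f) {r : ℝ} (hr : 0 ≤ r) (h : r ≤ f (0, r, 0)) :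
    r = 0 := by
  obtain ⟨k, -, -, hk⟩ := hf.2.1
  exact le_antisymm (by simpa using hk r 0 hr le_rfl (Or.inl h)) hr

theorem apply_one_zero_zero_lt_one (hf : MemA f) : f (1, 0, 0) < 1 := by
  obtain ⟨k, -, -, hk⟩ := hf.2.1
  by_contra! h
  linarith [hk 1 0 zero_le_one le_rfl (Or.inr h)]

theorem exists_pos_add_apply_one_lt_one (hf : MemA f) :
    ∃ δ > 0, ∀ t, 0 ≤ t → t < δ → t + f (1, t, 0) < 1 := by
  have hlim : Tendsto (fun t => t + f (1, t, 0)) (𝓝[≥] 0) (𝓝 (0 + f (1, 0, 0))) := by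
    have hid : Tendsto (fun t : ℝ => t) (𝓝[≥] 0) (𝓝 0) :=
      tendsto_nhdsWithin_of_tendsto_nhds tendsto_id
    exact hid.add <| hf.tendsto_comp (g := fun t => (1, t, 0))
      (tendsto_const_nhds.prodMk_nhds (hid.prodMk_nhds tendsto_const_nhds)) (by norm_num)
      (eventually_nhdsWithin_of_forall fun t (ht : 0 ≤ t) => ⟨zero_le_one, ht, le_rfl⟩)
  have hev : ∀ᶠ t in 𝓝[≥] 0, t + f (1, t, 0) < 1 :=
    hlim (gt_mem_nhds (by linarith [hf.apply_one_zero_zero_lt_one]))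
  obtain ⟨δ, hδ, hsub⟩ := mem_nhdsGE_iff_exists_Ico_subset.1 hev
  exact ⟨δ, hδ, fun t ht htδ => hsub ⟨ht, htδ⟩⟩

theorem apply_le_mul_apply_one (hf : MemA f) {d s t : ℝ} (hd : 0 < d) (hs : 0 ≤ s) (ht : 0 ≤ t) :
    f (d, s, t) ≤ d * f (1, s / d, t / d) := by
  have h := hf.2.2 d⁻¹ (inv_pos.2 hd) d s t hd.le hs ht
  rw [inv_mul_le_iff₀ hd] at h
  simpa [inv_mul_cancel₀ hd.ne', div_eq_inv_mul] using h

end MemA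

namespace IsAContraction

variable {M : Type*} [MetricSpace M] {f : ℝ × ℝ × ℝ → ℝ} {S : M → M}

theorem dist_le_max_zero (hS : IsAContraction f S) (x y : M) :
    dist (S x) (S y) ≤ max 0 (f (dist x y, dist x (S x), dist y (S y))) := by
  rcases eq_or_ne x y with rfl | hxy
  · simp
  · exact le_max_of_le_right (hS x y hxy)

theorem dist_map_map_le {k : ℝ}
    (hk : ∀ r s : ℝ, 0 ≤ r → 0 ≤ s → r ≤ f (s, r, s) → r ≤ k * s)
    (hS : IsAContraction f S) (x : M) : dist (S x) (S (S x)) ≤ k * dist x (S x) := by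
  rcases eq_or_ne (S x) x with hx | hx
  · simp [hx]
  · refine hk _ _ dist_nonneg dist_nonneg ?_
    simpa [dist_comm] using hS (S x) x hx

theorem dist_iterate_succ_le {k : ℝ} (hk0 : 0 ≤ k)
    (hk : ∀ r s : ℝ, 0 ≤ r → 0 ≤ s → r ≤ f (s, r, s) → r ≤ k * s)
    (hS : IsAContraction f S) (x : M) (n : ℕ) :
    dist (S^[n] x) (S^[n + 1] x) ≤ dist x (S x) * k ^ n := by
  induction n with
  | zero => simp
  | succ n ih =>
    rw [iterate_succ_apply' S (n + 1), iterate_succ_apply', pow_succ', ← mul_assoc, mul_comm _ k,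
      mul_assoc]
    refine (hS.dist_map_map_le hk _).trans ?_
    rw [← iterate_succ_apply' S n]
    exact mul_le_mul_of_nonneg_left ih hk0

theorem isFixedPt_of_tendsto_iterate (hf : MemA f) (hS : IsAContraction f S) {x p : M}
    (hp : Tendsto (fun n => S^[n] x) atTop (𝓝 p)) : IsFixedPt S p := by
  set r := dist p (S p)
  have hsucc : Tendsto (fun n => S^[n + 1] x) atTop (𝓝 p) := hp.comp (tendsto_add_atTop_nat 1)
  -- `max 0` covers the indices where the iterates hit `p`, about which the condition says nothing
  have hbound : Tendsto (fun n => max 0 (f (dist p (S^[n] x), r, dist (S^[n] x) (S^[n + 1] x))))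
      atTop (𝓝 (max 0 (f (0, r, 0)))) := by
    refine (tendsto_const_nhds (x := (0 : ℝ))).max <| hf.tendsto_comp ?_
      ⟨le_rfl, dist_nonneg, le_rfl⟩ (.of_forall fun n => ⟨dist_nonneg, dist_nonneg, dist_nonneg⟩)
    simpa using ((tendsto_const_nhds (x := p)).dist hp).prodMk_nhds
      ((tendsto_const_nhds (x := r)).prodMk_nhds (hp.dist hsucc))
  have hr : r ≤ max 0 (f (0, r, 0)) := by
    refine le_of_tendsto_of_tendsto' (hsucc.dist tendsto_const_nhds) hbound fun n => ?_
    rw [dist_comm, iterate_succ_apply']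
    exact hS.dist_le_max_zero p _
  rcases le_max_iff.1 hr with h | h
  · exact (dist_le_zero.1 h).symm
  · exact (dist_eq_zero.1 (hf.eq_zero_of_le_apply_zero dist_nonneg h)).symm

theorem exists_isFixedPt [CompleteSpace M] [Nonempty M] (hf : MemA f)
    (hS : IsAContraction f S) : ∃ p, IsFixedPt S p := by
  obtain ⟨k, hk0, hk1, hk⟩ := hf.2.1
  obtain ⟨x⟩ := ‹Nonempty M›
  obtain ⟨p, hp⟩ := cauchySeq_tendsto_of_complete <| cauchySeq_of_le_geometric k _ hk1 <|
    hS.dist_iterate_succ_le hk0 (fun r s hr hs h => hk r s hr hs (Or.inl h)) x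
  exact ⟨p, hS.isFixedPt_of_tendsto_iterate hf hp⟩

theorem exists_dist_le_mul_dist_map (hf : MemA f) (hS : IsAContraction f S) {p : M}
    (hp : IsFixedPt S p) : ∃ C, ∀ x, dist x p ≤ C * dist x (S x) := by
  obtain ⟨δ, hδ, hlt⟩ := hf.exists_pos_add_apply_one_lt_one
  refine ⟨δ⁻¹, fun x => ?_⟩
  set d := dist x p
  set ε := dist x (S x)
  by_contra! h
  have hd : 0 < d := (mul_nonneg (inv_nonneg.2 hδ.le) dist_nonneg).trans_lt h
  have hxp : x ≠ p := dist_pos.1 hd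
  have hεd : ε / d < δ := by
    rw [inv_mul_lt_iff₀ hδ] at h
    rwa [div_lt_iff₀ hd]
  have := calc
    d ≤ ε + dist (S x) (S p) := by rw [hp.eq]; exact dist_triangle _ _ _
    _ ≤ ε + f (d, ε, 0) := by simpa [hp.eq] using hS x p hxp
    _ ≤ ε + d * f (1, ε / d, 0) := by
      simpa using add_le_add_left (hf.apply_le_mul_apply_one hd dist_nonneg le_rfl) ε
    _ = d * (ε / d + f (1, ε / d, 0)) := by field_simp
    _ < d * 1 := mul_lt_mul_of_pos_left (hlt _ (by positivity) hεd) hd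
  linarith

end IsAContraction

section Krasnoselskij

variable {X : Type*} {lam : ℝ}

section Module

variable [AddCommGroup X] [Module ℝ X] {T : X → X}

theorem sub_krasnoselskijMap (x : X) : x - krasnoselskijMap lam T x = lam • (x - T x) := by
  simp only [krasnoselskijMap, sub_smul, one_smul, smul_sub]
  abel

theorem krasnoselskijMap_sub_krasnoselskijMap (hlam : lam ≠ 0) (x y : X) :
    krasnoselskijMap lam T x - krasnoselskijMap lam T y =
      lam • ((lam⁻¹ - 1) • (x - y) + T x - T y) := by
  simp only [krasnoselskijMap, smul_add, smul_sub, smul_smul, mul_inv_cancel₀ hlam,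
    sub_smul, one_smul]
  abel

theorem isFixedPt_krasnoselskijMap_iff (hlam : lam ≠ 0) {x : X} :
    IsFixedPt (krasnoselskijMap lam T) x ↔ IsFixedPt T x := by
  rw [IsFixedPt, IsFixedPt, eq_comm, ← sub_eq_zero, sub_krasnoselskijMap, smul_eq_zero,
    sub_eq_zero]
  simp [hlam, eq_comm]

end Module

variable [NormedAddCommGroup X] [NormedSpace ℝ X] {T : X → X}

theorem norm_sub_krasnoselskijMap (hlam : 0 ≤ lam) (x : X) :
    ‖x - krasnoselskijMap lam T x‖ = lam * ‖x - T x‖ := by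
  rw [sub_krasnoselskijMap, norm_smul, Real.norm_of_nonneg hlam]

theorem IsEnrichedAContraction.isAContraction_krasnoselskijMap {f : ℝ × ℝ × ℝ → ℝ} {b : ℝ}
    (hf : MemA f) (hb : 0 < b + 1) (hT : IsEnrichedAContraction f b T) :
    IsAContraction f (krasnoselskijMap (b + 1)⁻¹ T) := by
  intro x y hxy
  have hlam : 0 < (b + 1)⁻¹ := inv_pos.2 hb
  simp only [dist_eq_norm, norm_sub_krasnoselskijMap hlam.le]
  rw [krasnoselskijMap_sub_krasnoselskijMap hlam.ne', inv_inv, add_sub_cancel_right, norm_smul,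
    Real.norm_of_nonneg hlam.le]
  calc (b + 1)⁻¹ * ‖b • (x - y) + T x - T y‖
      ≤ (b + 1)⁻¹ * f ((b + 1) * ‖x - y‖, ‖x - T x‖, ‖y - T y‖) :=
        mul_le_mul_of_nonneg_left (hT x y hxy) hlam.le
    _ ≤ f ((b + 1)⁻¹ * ((b + 1) * ‖x - y‖), (b + 1)⁻¹ * ‖x - T x‖,
          (b + 1)⁻¹ * ‖y - T y‖) :=
      hf.2.2 _ hlam _ _ _ (by positivity) (norm_nonneg _) (norm_nonneg _)
    _ = _ := by rw [inv_mul_cancel_left₀ hb.ne']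

end Krasnoselskij

/-- The fixed point problem of an enriched `𝒜`-contraction on a real Banach space
has the limit shadowing property. -/
theorem enriched_A_contraction_limitShadowing
    {X : Type*} [NormedAddCommGroup X] [NormedSpace ℝ X] [CompleteSpace X]
    (T : X → X) (f : ℝ × ℝ × ℝ → ℝ) (hf : MemA f) (b : ℝ) (hb : 0 ≤ b)
    (hT : ∀ u v : X, u ≠ v →
      ‖b • (u - v) + T u - T v‖ ≤ f ((b + 1) * ‖u - v‖, ‖u - T u‖, ‖v - T v‖)) :
    ∀ u : ℕ → X,
      Filter.Tendsto (fun n => ‖u n - T (u n)‖) Filter.atTop (nhds 0) →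
      ∃ p : X, Filter.Tendsto (fun n => ‖T^[n] p - u n‖) Filter.atTop (nhds 0) := by
  intro u hu
  have hlam : 0 < (b + 1)⁻¹ := by positivity
  have hS := IsEnrichedAContraction.isAContraction_krasnoselskijMap hf (by linarith) hT
  obtain ⟨p, hp⟩ := hS.exists_isFixedPt hf
  obtain ⟨C, hC⟩ := hS.exists_dist_le_mul_dist_map hf hp
  have hTp : IsFixedPt T p := (isFixedPt_krasnoselskijMap_iff hlam.ne').1 hp
  refine ⟨p, squeeze_zero (fun _ => norm_nonneg _) (fun n => ?_)
    (by simpa using hu.const_mul (C * (b + 1)⁻¹))⟩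
  calc ‖T^[n] p - u n‖ = dist (u n) p := by rw [(hTp.iterate n).eq, dist_eq_norm']
    _ ≤ C * dist (u n) (krasnoselskijMap (b + 1)⁻¹ T (u n)) := hC (u n)
    _ = C * (b + 1)⁻¹ * ‖u n - T (u n)‖ := by
      rw [dist_eq_norm, norm_sub_krasnoselskijMap hlam.le, mul_assoc]
end

section
/- Let (X, ‖·‖) be a real Banach space and let T : X → X be a (b, θ)-enriched contraction, i.e., there exist b ∈ [0,∞) and θ ∈ [0, b+1) such that ‖b(u−v) + Tu − Tv‖ ≤ θ‖u−v‖ for all u, v ∈ X. Then T has a unique fixed point p ∈ X, and there exists λ ∈ (0,1] such that for every u₀ ∈ X the sequence defined by u_{n+1} = (1−λ)u_n + λT u_n (n ≥ 0) converges to p. -/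
/-!
With `λ = 1 / (b + 1)` the averaged map `S = (1 - λ) • id + λ • T` satisfies
`S u - S v = λ • (b • (u - v) + T u - T v)`, so the enriched contraction condition says exactly
that `S` is a Banach contraction with constant `θ / (b + 1) < 1`. Its fixed points are those of `T`,
and the Krasnoselskii iteration is the Picard iteration of `S`.
-/

open Function

section AveragedMap

variable {X : Type*} [NormedAddCommGroup X] [NormedSpace ℝ X]

def averagedMap (lam : ℝ) (T : X → X) (x : X) : X := (1 - lam) • x + lam • T x

theorem isFixedPt_averagedMap_iff {lam : ℝ} (hlam : lam ≠ 0) {T : X → X} {x : X} :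
    IsFixedPt (averagedMap lam T) x ↔ IsFixedPt T x := by
  have hdiff : averagedMap lam T x - x = lam • (T x - x) := by
    simp only [averagedMap]; module
  rw [IsFixedPt, IsFixedPt, ← sub_eq_zero, hdiff, smul_eq_zero, sub_eq_zero]
  simp [hlam]

theorem averagedMap_inv_sub {b : ℝ} (hb : b + 1 ≠ 0) (T : X → X) (u v : X) :
    averagedMap (b + 1)⁻¹ T u - averagedMap (b + 1)⁻¹ T v =
      (b + 1)⁻¹ • (b • (u - v) + T u - T v) := by
  have hcoef : 1 - (b + 1)⁻¹ = (b + 1)⁻¹ * b := by field_simp; ring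
  simp only [averagedMap, hcoef, mul_smul]
  module

theorem contractingWith_averagedMap {T : X → X} {b θ : ℝ} (hb : 0 < b + 1) (hθ : θ < b + 1)
    (hT : ∀ u v : X, ‖b • (u - v) + T u - T v‖ ≤ θ * ‖u - v‖) :
    ContractingWith (θ / (b + 1)).toNNReal (averagedMap (b + 1)⁻¹ T) := by
  refine ⟨Real.toNNReal_lt_one.2 ((div_lt_one hb).2 hθ), LipschitzWith.of_dist_le' fun u v => ?_⟩
  calc dist (averagedMap (b + 1)⁻¹ T u) (averagedMap (b + 1)⁻¹ T v)
      = (b + 1)⁻¹ * ‖b • (u - v) + T u - T v‖ := by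
        rw [dist_eq_norm, averagedMap_inv_sub hb.ne', norm_smul, Real.norm_of_nonneg (by positivity)]
    _ ≤ (b + 1)⁻¹ * (θ * ‖u - v‖) := by gcongr; exact hT u v
    _ = θ / (b + 1) * dist u v := by rw [dist_eq_norm]; ring

end AveragedMap

theorem eq_iterate_of_succ {α : Type*} {f : α → α} {u : ℕ → α} (hu : ∀ n, u (n + 1) = f (u n))
    (n : ℕ) : u n = f^[n] (u 0) := by
  induction n with
  | zero => rfl
  | succ n ih => rw [iterate_succ_apply', ← ih, hu]

theorem enriched_contraction_fixedPoint_general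
    {X : Type*} [NormedAddCommGroup X] [NormedSpace ℝ X] [CompleteSpace X]
    (T : X → X) (b θ : ℝ) (hb : 0 ≤ b) (hθ : θ < b + 1)
    (hT : ∀ u v : X, ‖b • (u - v) + T u - T v‖ ≤ θ * ‖u - v‖) :
    ∃ p : X, (T p = p ∧ ∀ q : X, T q = q → q = p) ∧
      ∃ lam : ℝ, 0 < lam ∧ lam ≤ 1 ∧
        ∀ u : ℕ → X, (∀ n : ℕ, u (n + 1) = (1 - lam) • u n + lam • T (u n)) →
          Filter.Tendsto u Filter.atTop (nhds p) := by
  have hb1 : 0 < b + 1 := by linarith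
  have hS := contractingWith_averagedMap hb1 hθ hT
  have hfix (x : X) : IsFixedPt (averagedMap (b + 1)⁻¹ T) x ↔ IsFixedPt T x :=
    isFixedPt_averagedMap_iff (inv_ne_zero hb1.ne')
  refine ⟨hS.fixedPoint _, ⟨(hfix _).1 hS.fixedPoint_isFixedPt,
    fun q hq => hS.fixedPoint_unique ((hfix q).2 hq)⟩, (b + 1)⁻¹, inv_pos.2 hb1,
    inv_le_one_of_one_le₀ (by linarith), fun u hu => ?_⟩
  exact (hS.tendsto_iterate_fixedPoint (u 0)).congr fun n => (eq_iterate_of_succ hu n).symm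

/-- A `(b, θ)`-enriched contraction on a real Banach space has a unique fixed point `p`,
and there is `λ ∈ (0,1]` such that every Krasnoselskii iteration
`u_{n+1} = (1-λ) u_n + λ T u_n` converges to `p`. -/
theorem enriched_contraction_fixedPoint
    {X : Type*} [NormedAddCommGroup X] [NormedSpace ℝ X] [CompleteSpace X]
    (T : X → X) (b θ : ℝ) (hb : 0 ≤ b) (hθ0 : 0 ≤ θ) (hθ : θ < b + 1)
    (hT : ∀ u v : X, ‖b • (u - v) + T u - T v‖ ≤ θ * ‖u - v‖) :
    ∃ p : X, (T p = p ∧ ∀ q : X, T q = q → q = p) ∧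
      ∃ lam : ℝ, 0 < lam ∧ lam ≤ 1 ∧
        ∀ u : ℕ → X, (∀ n : ℕ, u (n + 1) = (1 - lam) • u n + lam • T (u n)) →
          Filter.Tendsto u Filter.atTop (nhds p) :=
  enriched_contraction_fixedPoint_general T b θ hb hθ hT
end
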